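/- arXiv:1103.0616 — 2 statements merged into one kernel-verified Lean document; each statement's English description precedes it below -/
import Mathlib

section
/- Let 0 < p < ∞, 1 ≤ s < ∞ and -n < α < ∞. Then the continuous compactly supported functions C_c⁰(ℝⁿ) are dense in BL^{p,s}_{|x|^α}(ℝⁿ) with respect to its quasinorm. -/
open MeasureTheory Metric ENNReal Filter
open scoped ENNReal NNReal

noncomputable section

abbrev Rn (n : ℕ) := EuclideanSpace ℝ (Fin n)

/-- A `(p,s,α)`-block: supported in a closed ball `B(x₀,r)` with
`‖a‖_{L^s} ≤ |B|^{-α/(pn)-1/p+1/s}` (with `1/s = 0` when `s = ∞`). -/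
def IsBlock (n : ℕ) (p : ℝ) (s : ℝ≥0∞) (α : ℝ) (a : Rn n → ℝ) : Prop :=
  Measurable a ∧
  ∃ x₀ : Rn n, ∃ r : ℝ, 0 < r ∧ (∀ x, x ∉ closedBall x₀ r → a x = 0) ∧
    eLpNorm a s volume ≤
      ENNReal.ofReal ((volume (closedBall x₀ r)).toReal ^ (-α / (p * n) - 1 / p + s.toReal⁻¹))

/-- A decomposition `f = Σ l k • a k` (a.e. convergence) into `(p,s,α)`-blocks with
`Σ |l k| ^ min p 1 < ∞`. -/
def IsBLDecomp (n : ℕ) (p : ℝ) (s : ℝ≥0∞) (α : ℝ)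
    (f : Rn n → ℝ) (l : ℕ → ℝ) (a : ℕ → Rn n → ℝ) : Prop :=
  (∀ k, IsBlock n p s α (a k)) ∧ Summable (fun k => |l k| ^ min p 1) ∧
  (∀ᵐ x : Rn n ∂volume, HasSum (fun k => l k * a k x) (f x))

/-- Membership in the block space `BL^{p,s}_{|x|^α}`. -/
def MemBL (n : ℕ) (p : ℝ) (s : ℝ≥0∞) (α : ℝ) (f : Rn n → ℝ) : Prop :=
  ∃ l a, IsBLDecomp n p s α f l a

/-- The quasinorm of `BL^{p,s}_{|x|^α}`:
`inf (Σ |l k| ^ min p 1)^(1/min p 1)` over all block decompositions. -/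
def BLnorm (n : ℕ) (p : ℝ) (s : ℝ≥0∞) (α : ℝ) (f : Rn n → ℝ) : ℝ :=
  sInf { c | ∃ l a, IsBLDecomp n p s α f l a ∧
    c = (∑' k, |l k| ^ min p 1) ^ (min p 1)⁻¹ }

/-!
Split a block decomposition `f = ∑ λ_k a_k` into a head `k < N` and a tail whose
`ℓ^{min(p,1)}` mass is small. Each head block `a_k`, supported in `B(x_k, r_k)`, is approximated
in `L^s` by a continuous compactly supported `g_k` vanishing outside `B(x_k, r_k + 1)`; the error
`a_k - g_k` is then `δ_k` times a block on that fixed ball, with `δ_k` as small as we like. Hence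
`f - ∑_{k<N} λ_k g_k = ∑_{k<N} (λ_k δ_k) b_k + ∑_{k≥N} λ_k a_k` has small quasinorm.
-/

open Topology

variable {n : ℕ} {p : ℝ} {s : ℝ≥0∞} {α : ℝ}

theorem eLpNorm_sub_mul_le_of_eq_one {X : Type*} [MeasurableSpace X] {μ : Measure X} {q : ℝ≥0∞}
    {a g χ : X → ℝ} (hχ : ∀ x, χ x ∈ Set.Icc (0 : ℝ) 1) (ha : ∀ x, a x ≠ 0 → χ x = 1) :
    eLpNorm (a - χ * g) q μ ≤ eLpNorm (a - g) q μ := by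
  refine eLpNorm_mono fun x => ?_
  have hax : a x - χ x * g x = χ x * (a x - g x) := by
    by_cases h : a x = 0
    · rw [h]; ring
    · rw [ha x h]; ring
  simp only [Pi.sub_apply, Pi.mul_apply, hax, norm_mul]
  exact mul_le_of_le_one_left (norm_nonneg _) (by rw [Real.norm_of_nonneg (hχ x).1]; exact (hχ x).2)

theorem isBlock_inv_smul {e : Rn n → ℝ} (he : Measurable e) {x₀ : Rn n} {r : ℝ} (hr : 0 < r)
    (hsupp : ∀ x, x ∉ closedBall x₀ r → e x = 0) {δ : ℝ} (hδ : 0 < δ)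
    (hnorm : eLpNorm e s volume ≤ ENNReal.ofReal
      (δ * (volume (closedBall x₀ r)).toReal ^ (-α / (p * n) - 1 / p + s.toReal⁻¹))) :
    IsBlock n p s α (δ⁻¹ • e) := by
  refine ⟨he.const_smul _, x₀, r, hr, fun x hx => by simp [hsupp x hx], ?_⟩
  rw [eLpNorm_const_smul, Real.enorm_eq_ofReal (by positivity)]
  calc ENNReal.ofReal δ⁻¹ * eLpNorm e s volume
      ≤ ENNReal.ofReal δ⁻¹ * ENNReal.ofReal
          (δ * (volume (closedBall x₀ r)).toReal ^ (-α / (p * n) - 1 / p + s.toReal⁻¹)) := by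
        gcongr
    _ = _ := by rw [← ENNReal.ofReal_mul (by positivity), inv_mul_cancel_left₀ hδ.ne']

theorem IsBlock.exists_sub_eq_smul (hs : s ≠ ∞) {a : Rn n → ℝ} (ha : IsBlock n p s α a)
    {δ : ℝ} (hδ : 0 < δ) :
    ∃ g b : Rn n → ℝ, Continuous g ∧ HasCompactSupport g ∧ IsBlock n p s α b ∧
      a - g = δ • b := by
  obtain ⟨ha_meas, x₀, r, hr, hsupp, hnorm⟩ := ha
  set C := (volume (closedBall x₀ (r + 1))).toReal ^ (-α / (p * n) - 1 / p + s.toReal⁻¹)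
  have hC : 0 < C := Real.rpow_pos_of_pos (ENNReal.toReal_pos
    (measure_closedBall_pos volume _ (by linarith)).ne' measure_closedBall_lt_top.ne) _
  have ha_memLp : MemLp a s volume :=
    ⟨ha_meas.aestronglyMeasurable, (hnorm.trans_lt ENNReal.ofReal_lt_top)⟩
  obtain ⟨g₀, -, hg₀, hg₀_cont, -⟩ := ha_memLp.exists_hasCompactSupport_eLpNorm_sub_le hs
    (ε := ENNReal.ofReal (δ * C)) (ENNReal.ofReal_pos.mpr (by positivity)).ne'
  -- Cutting `g₀` off outside `B(x₀, r + 1)` keeps the error in a ball chosen before `g₀`.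
  obtain ⟨χ, hχ_one, hχ_zero, hχ_supp, hχ_mem⟩ := exists_continuous_one_zero_of_isCompact
    (isCompact_closedBall x₀ r) isOpen_ball.isClosed_compl
    (Set.disjoint_compl_right_iff_subset.mpr (closedBall_subset_ball (lt_add_one r)))
  have hχ_out : ∀ x, x ∉ closedBall x₀ (r + 1) → χ x = 0 := fun x hx =>
    hχ_zero fun hb => hx (ball_subset_closedBall hb)
  refine ⟨χ * g₀, δ⁻¹ • (a - χ * g₀), χ.continuous.mul hg₀_cont,
    hχ_supp.mul_right, isBlock_inv_smul (x₀ := x₀) (r := r + 1) ?_ (by linarith) ?_ hδ ?_, ?_⟩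
  · exact ha_meas.sub (χ.continuous.mul hg₀_cont).measurable
  · intro x hx
    simp [hχ_out x hx, hsupp x fun h => hx (closedBall_subset_closedBall (by linarith) h)]
  · refine (eLpNorm_sub_mul_le_of_eq_one hχ_mem fun x hx => hχ_one ?_).trans hg₀
    by_contra h
    exact hx (hsupp x h)
  · rw [smul_inv_smul₀ hδ.ne']

theorem BLnorm_le {f : Rn n → ℝ} {l : ℕ → ℝ} {a : ℕ → Rn n → ℝ}
    (h : IsBLDecomp n p s α f l a) :
    BLnorm n p s α f ≤ (∑' k, |l k| ^ min p 1) ^ (min p 1)⁻¹ :=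
  csInf_le ⟨0, by rintro _ ⟨l', a', -, rfl⟩; positivity⟩ ⟨l, a, h, rfl⟩

theorem hasSum_ite_lt {M : Type*} [AddCommMonoid M] [TopologicalSpace M] (u : ℕ → M) (N : ℕ) :
    HasSum (fun k => if k < N then u k else 0) (∑ k ∈ Finset.range N, u k) := by
  convert hasSum_sum_of_ne_finset_zero (L := .unconditional ℕ) (s := Finset.range N)
    (f := fun k => if k < N then u k else 0) fun k hk => if_neg (by simpa using hk) using 1
  exact Finset.sum_congr rfl fun k hk => (if_pos (Finset.mem_range.mp hk)).symm

theorem IsBLDecomp.sub_sum_range {f : Rn n → ℝ} {l : ℕ → ℝ} {a : ℕ → Rn n → ℝ}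
    (hf : IsBLDecomp n p s α f l a) (N : ℕ) {g b : ℕ → Rn n → ℝ} {c : ℕ → ℝ}
    (hb : ∀ k, IsBlock n p s α (b k)) (hab : ∀ k, a k - g k = c k • b k) :
    IsBLDecomp n p s α (fun x => f x - ∑ k ∈ Finset.range N, l k * g k x)
      (fun k => if k < N then l k * c k else l k) (fun k => if k < N then b k else a k) := by
  obtain ⟨ha, hl, hsum⟩ := hf
  refine ⟨fun k => by dsimp only; split_ifs; exacts [hb k, ha k], ?_, ?_⟩
  · refine hl.congr_cofinite ?_
    rw [Nat.cofinite_eq_atTop]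
    filter_upwards [eventually_ge_atTop N] with k hk
    simp [not_lt.mpr hk]
  · filter_upwards [hsum] with x hx
    refine (hx.sub (hasSum_ite_lt (fun k => l k * g k x) N)).congr_fun fun k => ?_
    split_ifs
    · have hk := congrFun (hab k) x
      simp only [Pi.sub_apply, Pi.smul_apply, smul_eq_mul] at hk
      rw [mul_assoc, ← hk, mul_sub]
    · rw [sub_zero]

theorem exists_pos_abs_mul_rpow_le (c : ℝ) {m η : ℝ} (hm : 0 < m) (hη : 0 < η) :
    ∃ δ > 0, |c * δ| ^ m ≤ η := by
  have hlim : Tendsto (fun δ => |c * δ| ^ m) (𝓝[>] 0) (𝓝 0) := by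
    have hcont : Continuous fun δ : ℝ => |c * δ| ^ m :=
      (continuous_const.mul continuous_id).abs.rpow_const fun _ => Or.inr hm.le
    simpa [Real.zero_rpow hm.ne'] using hcont.tendsto 0 |>.mono_left nhdsWithin_le_nhds
  obtain ⟨δ, hδη, hδ⟩ := ((hlim.eventually (ge_mem_nhds hη)).and self_mem_nhdsWithin).exists
  exact ⟨δ, hδ, hδη⟩

theorem IsBLDecomp.exists_continuous_sub {f : Rn n → ℝ} {l : ℕ → ℝ} {a : ℕ → Rn n → ℝ}
    (hp : 0 < p) (hs : s ≠ ∞) (hf : IsBLDecomp n p s α f l a) (N : ℕ) {η : ℝ} (hη : 0 < η) :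
    ∃ g L A, Continuous g ∧ HasCompactSupport g ∧
      IsBLDecomp n p s α (fun x => f x - g x) L A ∧
      ∑' k, |L k| ^ min p 1 ≤ N * η + ∑' k, |l (k + N)| ^ min p 1 := by
  choose δ hδ hlδ using fun k => exists_pos_abs_mul_rpow_le (l k) (lt_min hp one_pos) hη
  choose g b hg hg_supp hb hab using fun k => (hf.1 k).exists_sub_eq_smul hs (hδ k)
  have hG := hf.sub_sum_range N hb hab
  have hG_supp : HasCompactSupport (∑ k ∈ Finset.range N, (fun _ => l k) * g k) :=
    .finset_sum fun k _ => (hg_supp k).mul_left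
  refine ⟨fun x => ∑ k ∈ Finset.range N, l k * g k x, _, _, by fun_prop, ?_, hG, ?_⟩
  · convert hG_supp using 1
    ext x
    simp [Finset.sum_apply]
  rw [← hG.2.1.sum_add_tsum_nat_add N]
  have hhead : ∑ k ∈ Finset.range N, |if k < N then l k * δ k else l k| ^ min p 1 ≤ N * η := by
    calc _ ≤ ∑ _k ∈ Finset.range N, η :=
          Finset.sum_le_sum fun k hk => by rw [if_pos (Finset.mem_range.mp hk)]; exact hlδ k
      _ = N * η := by simp
  have htail : ∑' k, |if k + N < N then l (k + N) * δ (k + N) else l (k + N)| ^ min p 1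
      = ∑' k, |l (k + N)| ^ min p 1 := tsum_congr fun k => by simp
  linarith

theorem continuous_compactSupport_dense_BL_general (n : ℕ) (p : ℝ) (s : ℝ≥0∞) (α : ℝ)
    (hp : 0 < p) (hs2 : s ≠ ∞) :
    ∀ f : Rn n → ℝ, MemBL n p s α f → ∀ ε : ℝ, 0 < ε →
      ∃ g : Rn n → ℝ, Continuous g ∧ HasCompactSupport g ∧
        MemBL n p s α (fun x => f x - g x) ∧
        BLnorm n p s α (fun x => f x - g x) < ε := by
  rintro f ⟨l, a, hf⟩ ε hε
  set m := min p 1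
  have hm : 0 < m := lt_min hp one_pos
  have hεm : 0 < ε ^ m := Real.rpow_pos_of_pos hε m
  obtain ⟨N, hN⟩ : ∃ N, ∑' k, |l (k + N)| ^ m < ε ^ m / 2 :=
    ((_root_.tendsto_sum_nat_add fun k => |l k| ^ m).eventually (gt_mem_nhds (half_pos hεm))).exists
  obtain ⟨g, L, A, hg, hg_supp, hdecomp, hL⟩ :=
    hf.exists_continuous_sub hp hs2 N (η := ε ^ m / (2 * (N + 1))) (by positivity)
  refine ⟨g, hg, hg_supp, ⟨L, A, hdecomp⟩, (BLnorm_le hdecomp).trans_lt ?_⟩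
  have hhead : N * (ε ^ m / (2 * (N + 1))) < ε ^ m / 2 := by
    rw [mul_div_assoc', div_lt_div_iff₀ (by positivity) two_pos]
    nlinarith
  rw [Real.rpow_inv_lt_iff_of_pos (by positivity) hε.le hm]
  linarith

/-- for `0 < p < ∞`, `1 ≤ s < ∞`, `-n < α`, the continuous compactly
supported functions are dense in `BL^{p,s}_{|x|^α}`. -/
theorem continuous_compactSupport_dense_BL (n : ℕ) (hn : 0 < n) (p : ℝ) (s : ℝ≥0∞) (α : ℝ)
    (hp : 0 < p) (hs1 : 1 ≤ s) (hs2 : s ≠ ∞) (hα : -(n : ℝ) < α) :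
    ∀ f : Rn n → ℝ, MemBL n p s α f → ∀ ε : ℝ, 0 < ε →
      ∃ g : Rn n → ℝ, Continuous g ∧ HasCompactSupport g ∧
        MemBL n p s α (fun x => f x - g x) ∧
        BLnorm n p s α (fun x => f x - g x) < ε :=
  continuous_compactSupport_dense_BL_general n p s α hp hs2
end
end

section
/- Molecular theorem: Let 0 < s < ∞, 0 < p < ∞, α ∈ ℝ, A₀, B₀ ∈ ℝ with A₀ - B₀ = 1/s - 1/p - α/(np), and 0 < ε < A₀; set a = A₀ - ε, b = B₀ - ε, and assume a > 0. If M ∈ L^s(ℝⁿ) satisfies M(x)|x-x₀|^{nb} ∈ L^s and ℜ(M) := ‖M‖_{L^s}^{a/b} · ‖M(·)|·-x₀|^{nb}‖_{L^s}^{1-a/b} < ∞, then M ∈ BL^{p,s}_{|x|^α}(ℝⁿ) and ‖M‖_{BL^{p,s}_{|x|^α}} ≤ C ℜ(M) with C independent of M. -/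
open MeasureTheory Metric ENNReal Filter
open scoped ENNReal NNReal

noncomputable section

/-!
Split the molecule `M` along the dyadic shells `R 2^(k-1) < |x - x₀| ≤ R 2^k` around its center.
On the `k`-th shell the weight `|x - x₀|^(n b)` is comparable to `(R 2^k)^(n b)`, so the piece is
`λ_k` times a block over `B(x₀, R 2^k)` with `λ_k ≲ ‖M |· - x₀|^(n b)‖_s (R 2^k)^(-n a)`, while the
innermost ball costs at most `‖M‖_s R^(-n(a-b))`. Choosing `R^(n b) = ‖M |· - x₀|^(n b)‖_s / ‖M‖_s`
balances the two, and the `λ_k` form a geometric series of ratio `2^(-n a) < 1` whose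
`ℓ^min(p,1)` sum is `C ℜ(M)`.
-/
open Set Function

lemma hasSum_indicator_of_pairwise_disjoint {ι X G : Type*} [AddCommMonoid G]
    [TopologicalSpace G] {s : ι → Set X} (hs : Pairwise (Disjoint on s)) {x : X}
    (hx : x ∈ ⋃ i, s i) (f : X → G) :
    HasSum (fun i => (s i).indicator f x) (f x) := by
  obtain ⟨i, hi⟩ := mem_iUnion.mp hx
  rw [← indicator_of_mem hi f]
  exact hasSum_single i fun j hji =>
    indicator_of_notMem (fun hj => disjoint_left.mp (hs hji) hj hi) f

section DyadicBalls

variable {X : Type*} [PseudoMetricSpace X] {x₀ : X} {R : ℝ}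

lemma monotone_closedBall_mul_two_pow (x₀ : X) (hR : 0 ≤ R) :
    Monotone fun k : ℕ => closedBall x₀ (R * 2 ^ k) := fun _ _ hij =>
  closedBall_subset_closedBall (mul_le_mul_of_nonneg_left (pow_le_pow_right₀ one_le_two hij) hR)

lemma iUnion_closedBall_mul_two_pow (x₀ : X) (hR : 0 < R) :
    ⋃ k : ℕ, closedBall x₀ (R * 2 ^ k) = univ := by
  refine eq_univ_of_forall fun x => mem_iUnion.mpr ?_
  obtain ⟨k, hk⟩ := pow_unbounded_of_one_lt (dist x x₀ / R) one_lt_two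
  exact ⟨k, mem_closedBall.mpr (by rw [mul_comm]; exact (div_le_iff₀ hR).mp hk.le)⟩

lemma hasSum_indicator_disjointed_closedBall_mul_two_pow {G : Type*} [AddCommMonoid G]
    [TopologicalSpace G] (x₀ : X) (hR : 0 < R) (f : X → G) (x : X) :
    HasSum (fun k => (disjointed (fun k : ℕ => closedBall x₀ (R * 2 ^ k)) k).indicator f x)
      (f x) :=
  hasSum_indicator_of_pairwise_disjoint (disjoint_disjointed _)
    (by simp [iUnion_disjointed, iUnion_closedBall_mul_two_pow x₀ hR]) f

end DyadicBalls

lemma one_le_max_two_rpow_mul_rpow_neg_mul_rpow {β r t : ℝ} (hr : 0 < r) (hrt : r < 2 * t)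
    (htr : t ≤ r) : 1 ≤ max (2 ^ β) 1 * r ^ (-β) * t ^ β := by
  have ht : 0 < t := by linarith
  rw [mul_assoc, Real.rpow_neg hr.le, ← div_eq_inv_mul, ← Real.div_rpow ht.le hr.le]
  rcases le_or_gt 0 β with hβ | hβ
  · have hhalf : (2 : ℝ)⁻¹ ≤ t / r := by rw [le_div_iff₀ hr]; linarith
    calc (1 : ℝ) = 2 ^ β * (2 : ℝ)⁻¹ ^ β := by
          rw [Real.inv_rpow zero_le_two, mul_inv_cancel₀ (by positivity)]
      _ ≤ max (2 ^ β) 1 * (t / r) ^ β := by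
          gcongr
          exact le_max_left _ _
  · calc (1 : ℝ) = 1 * 1 := (mul_one 1).symm
      _ ≤ max (2 ^ β) 1 * (t / r) ^ β := by
          gcongr
          · exact le_max_right _ _
          · exact Real.one_le_rpow_of_pos_of_le_one_of_nonpos (by positivity)
              ((div_le_one hr).mpr htr) hβ.le

section Shells

variable {E : Type*} [SeminormedAddCommGroup E] [MeasurableSpace E] {μ : Measure E}
  {s : ℝ≥0∞} {M : E → ℝ} {x₀ : E} {R β ν : ℝ}

lemma eLpNorm_indicator_disjointed_closedBall_le (hR : 0 < R) (hν : 0 ≤ ν)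
    (hN : eLpNorm (fun x => M x * ‖x - x₀‖ ^ β) s μ ≤ ENNReal.ofReal ν)
    (hM : eLpNorm M s μ ≤ ENNReal.ofReal (R ^ (-β) * ν)) (k : ℕ) :
    eLpNorm ((disjointed (fun k : ℕ => closedBall x₀ (R * 2 ^ k)) k).indicator M) s μ ≤
      ENNReal.ofReal (max (2 ^ β) 1 * (R * 2 ^ k) ^ (-β) * ν) := by
  rcases k with _ | k
  · rw [disjointed_zero, pow_zero, mul_one]
    refine (eLpNorm_indicator_le M).trans (hM.trans (ENNReal.ofReal_le_ofReal ?_))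
    gcongr
    exact le_mul_of_one_le_left (by positivity) (le_max_right _ _)
  set d := max (2 ^ β) 1 * (R * 2 ^ (k + 1)) ^ (-β)
  have hd : 0 ≤ d := by positivity
  rw [(monotone_closedBall_mul_two_pow x₀ hR.le).disjointed_add_one, ENNReal.ofReal_mul hd]
  calc eLpNorm ((closedBall x₀ (R * 2 ^ (k + 1)) \ closedBall x₀ (R * 2 ^ k)).indicator M) s μ
      ≤ eLpNorm (d • fun x => M x * ‖x - x₀‖ ^ β) s μ := by
        refine eLpNorm_mono fun x => ?_
        by_cases hx : x ∈ closedBall x₀ (R * 2 ^ (k + 1)) \ closedBall x₀ (R * 2 ^ k)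
        · rw [indicator_of_mem hx]
          obtain ⟨hx₁, hx₂⟩ := hx
          rw [mem_closedBall, dist_eq_norm] at hx₁
          rw [mem_closedBall, dist_eq_norm, not_le] at hx₂
          have hweight : 1 ≤ d * ‖x - x₀‖ ^ β :=
            one_le_max_two_rpow_mul_rpow_neg_mul_rpow (by positivity) (by rw [pow_succ]; linarith)
              hx₁
          simp only [Pi.smul_apply, smul_eq_mul, norm_mul, Real.norm_eq_abs,
            abs_of_nonneg hd, abs_of_nonneg (Real.rpow_nonneg (norm_nonneg _) _)]
          nlinarith [abs_nonneg (M x)]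
        · rw [indicator_of_notMem hx, norm_zero]
          exact norm_nonneg _
    _ = ENNReal.ofReal d * eLpNorm (fun x => M x * ‖x - x₀‖ ^ β) s μ := by
        rw [eLpNorm_const_smul, Real.enorm_eq_ofReal hd]
    _ ≤ ENNReal.ofReal d * ENNReal.ofReal ν := by gcongr

end Shells

lemma hasSum_mul_pow_rpow {c q t : ℝ} (hc : 0 ≤ c) (hq : 0 ≤ q) (hq1 : q < 1) (ht : 0 < t) :
    HasSum (fun k : ℕ => (c * q ^ k) ^ t) (c ^ t * (1 - q ^ t)⁻¹) := by
  have hterm : ∀ k : ℕ, (c * q ^ k) ^ t = c ^ t * (q ^ t) ^ k := fun k => by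
    rw [Real.mul_rpow hc (by positivity), ← Real.rpow_natCast, ← Real.rpow_natCast,
      ← Real.rpow_mul hq, ← Real.rpow_mul hq, mul_comm (k : ℝ)]
  simp only [hterm]
  exact (hasSum_geometric_of_lt_one (by positivity) (Real.rpow_lt_one hq hq1 ht)).mul_left _

lemma tsum_abs_mul_pow_rpow_rpow_inv {c q t : ℝ} (hc : 0 ≤ c) (hq : 0 ≤ q) (hq1 : q < 1)
    (ht : 0 < t) : (∑' k : ℕ, |c * q ^ k| ^ t) ^ t⁻¹ = c * ((1 - q ^ t)⁻¹) ^ t⁻¹ := by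
  have hq_t : q ^ t < 1 := Real.rpow_lt_one hq hq1 ht
  simp only [abs_of_nonneg (mul_nonneg hc (pow_nonneg hq _))]
  rw [(hasSum_mul_pow_rpow hc hq hq1 ht).tsum_eq,
    Real.mul_rpow (by positivity) (inv_nonneg.mpr (sub_nonneg.mpr hq_t.le)),
    ← Real.rpow_mul hc, mul_inv_cancel₀ ht.ne', Real.rpow_one]

section BlockSpace

variable {n : ℕ} {p : ℝ} {s : ℝ≥0∞} {α : ℝ} {f : Rn n → ℝ}

lemma isBlock_zero : IsBlock n p s α 0 :=
  ⟨measurable_const, 0, 1, one_pos, fun _ _ => rfl, by simp⟩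

lemma isBlock_inv_mul {g : Rn n → ℝ} {x₀ : Rn n} {r c : ℝ} (hg : Measurable g) (hc : 0 < c)
    (hr : 0 < r) (hsupp : ∀ x ∉ closedBall x₀ r, g x = 0)
    (hnorm : eLpNorm g s volume ≤ ENNReal.ofReal
      (c * (volume (closedBall x₀ r)).toReal ^ (-α / (p * n) - 1 / p + s.toReal⁻¹))) :
    IsBlock n p s α fun x => c⁻¹ * g x := by
  refine ⟨hg.const_mul _, x₀, r, hr, fun x hx => by simp [hsupp x hx], ?_⟩
  rw [show (fun x => c⁻¹ * g x) = c⁻¹ • g from rfl, eLpNorm_const_smul,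
    Real.enorm_eq_ofReal (inv_nonneg.mpr hc.le)]
  calc ENNReal.ofReal c⁻¹ * eLpNorm g s volume
      ≤ ENNReal.ofReal c⁻¹ * ENNReal.ofReal
          (c * (volume (closedBall x₀ r)).toReal ^ (-α / (p * n) - 1 / p + s.toReal⁻¹)) := by
        gcongr
    _ = _ := by rw [← ENNReal.ofReal_mul (by positivity), inv_mul_cancel_left₀ hc.ne']

lemma memBL_and_BLnorm_le_of_isBLDecomp {l : ℕ → ℝ} {a : ℕ → Rn n → ℝ}
    (h : IsBLDecomp n p s α f l a) :
    MemBL n p s α f ∧ BLnorm n p s α f ≤ (∑' k, |l k| ^ min p 1) ^ (min p 1)⁻¹ := by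
  refine ⟨⟨l, a, h⟩, csInf_le ⟨0, ?_⟩ ⟨l, a, h, rfl⟩⟩
  rintro _ ⟨l', a', -, rfl⟩
  exact Real.rpow_nonneg (tsum_nonneg fun k => Real.rpow_nonneg (abs_nonneg _) _) _

lemma memBL_and_BLnorm_nonpos_of_ae_eq_zero (hp : 0 < p) (hf : f =ᵐ[volume] 0) :
    MemBL n p s α f ∧ BLnorm n p s α f ≤ 0 := by
  have hmin : min p 1 ≠ 0 := (lt_min hp one_pos).ne'
  have hdecomp : IsBLDecomp n p s α f 0 0 := by
    refine ⟨fun _ => isBlock_zero, ?_, ?_⟩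
    · simp [Real.zero_rpow hmin]
    · filter_upwards [hf] with x hx
      simp [hx]
  simpa [Real.zero_rpow hmin, Real.zero_rpow (inv_ne_zero hmin)] using
    memBL_and_BLnorm_le_of_isBLDecomp hdecomp

lemma isBLDecomp_of_hasSum {g : ℕ → Rn n → ℝ} {c r : ℕ → ℝ} {x₀ : Rn n}
    (hg : ∀ k, Measurable (g k)) (hc : ∀ k, 0 < c k) (hr : ∀ k, 0 < r k)
    (hsupp : ∀ k, ∀ x ∉ closedBall x₀ (r k), g k x = 0)
    (hnorm : ∀ k, eLpNorm (g k) s volume ≤ ENNReal.ofReal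
      (c k * (volume (closedBall x₀ (r k))).toReal ^ (-α / (p * n) - 1 / p + s.toReal⁻¹)))
    (hsum : Summable fun k => c k ^ min p 1) (hf : ∀ x, HasSum (fun k => g k x) (f x)) :
    IsBLDecomp n p s α f c fun k x => (c k)⁻¹ * g k x := by
  refine ⟨fun k => isBlock_inv_mul (hg k) (hc k) (hr k) (hsupp k) (hnorm k), ?_, ?_⟩
  · simpa only [abs_of_pos (hc _)] using hsum
  · refine Eventually.of_forall fun x => ?_
    simpa only [mul_inv_cancel_left₀ (hc _).ne'] using hf x

end BlockSpace

lemma ae_eq_zero_of_eLpNorm_mul_rpow_norm_sub_eq_zero {E : Type*} [NormedAddCommGroup E]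
    [MeasurableSpace E] {μ : Measure E} [NullSingletonClass μ] {s : ℝ≥0∞} (hs : s ≠ 0)
    {M : E → ℝ} {x₀ : E} {β : ℝ}
    (hmeas : AEStronglyMeasurable (fun x => M x * ‖x - x₀‖ ^ β) μ)
    (h0 : eLpNorm (fun x => M x * ‖x - x₀‖ ^ β) s μ = 0) : M =ᵐ[μ] 0 := by
  have hne : ∀ᵐ x ∂μ, x ≠ x₀ := by simp [ae_iff, measure_singleton]
  filter_upwards [(eLpNorm_eq_zero_iff hmeas hs).mp h0, hne] with x hx hxx
  have hweight : ‖x - x₀‖ ^ β ≠ 0 :=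
    (Real.rpow_pos_of_pos (norm_pos_iff.mpr (sub_ne_zero.mpr hxx)) _).ne'
  exact (mul_eq_zero.mp hx).resolve_right hweight

section Molecule

variable {n : ℕ} {p : ℝ} {s : ℝ≥0∞} {α A B : ℝ}

def moleculeConst (n : ℕ) (p A B : ℝ) : ℝ :=
  max ((2 : ℝ) ^ ((n : ℝ) * B)) 1 * (volume (closedBall (0 : Rn n) 1)).toReal ^ (-(A - B)) *
    ((1 - ((2 : ℝ) ^ (-((n : ℝ) * A))) ^ min p 1)⁻¹) ^ (min p 1)⁻¹

lemma volume_real_closedBall_zero_one_pos : 0 < (volume (closedBall (0 : Rn n) 1)).toReal :=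
  ENNReal.toReal_pos (measure_closedBall_pos _ _ one_pos).ne' measure_closedBall_lt_top.ne

lemma two_rpow_neg_mul_lt_one (hn : 0 < n) (hA : 0 < A) : (2 : ℝ) ^ (-((n : ℝ) * A)) < 1 :=
  Real.rpow_lt_one_of_one_lt_of_neg one_lt_two (neg_lt_zero.mpr (mul_pos (Nat.cast_pos.mpr hn) hA))

lemma moleculeConst_pos (hn : 0 < n) (hp : 0 < p) (hA : 0 < A) : 0 < moleculeConst n p A B := by
  have hq := Real.rpow_lt_one (by positivity) (two_rpow_neg_mul_lt_one hn hA) (lt_min hp one_pos)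
  have hvol₁ := volume_real_closedBall_zero_one_pos (n := n)
  have hgap : 0 < 1 - ((2 : ℝ) ^ (-((n : ℝ) * A))) ^ min p 1 := sub_pos.mpr hq
  unfold moleculeConst
  positivity

lemma rpow_neg_mul_volume_real_closedBall_rpow (x₀ : Rn n) {r : ℝ} (hr : 0 < r) (A B : ℝ) :
    (volume (closedBall (0 : Rn n) 1)).toReal ^ (-(A - B)) * r ^ (-((n : ℝ) * A)) *
      (volume (closedBall x₀ r)).toReal ^ (A - B) = r ^ (-((n : ℝ) * B)) := by
  have hvol := Measure.addHaar_real_closedBall' (volume : Measure (Rn n)) x₀ hr.le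
  rw [finrank_euclideanSpace_fin] at hvol
  have hvol₁ : 0 < volume.real (closedBall (0 : Rn n) 1) := volume_real_closedBall_zero_one_pos
  rw [← measureReal_def, ← measureReal_def, hvol, Real.mul_rpow (by positivity) hvol₁.le,
    ← Real.rpow_natCast, ← Real.rpow_mul hr.le]
  calc _ = (volume.real (closedBall (0 : Rn n) 1) ^ (-(A - B)) *
        volume.real (closedBall (0 : Rn n) 1) ^ (A - B)) *
        (r ^ (-((n : ℝ) * A)) * r ^ ((n : ℝ) * (A - B))) := by ring
    _ = r ^ (-((n : ℝ) * B)) := by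
        rw [← Real.rpow_add hvol₁, ← Real.rpow_add hr, neg_add_cancel, Real.rpow_zero, one_mul]
        ring_nf

lemma memBL_and_BLnorm_le_of_dyadic (hn : 0 < n) (hp : 0 < p)
    (hγ : -α / (p * n) - 1 / p + s.toReal⁻¹ = A - B) (hA : 0 < A) {M : Rn n → ℝ} {x₀ : Rn n}
    {R ν : ℝ} (hM : Measurable M) (hR : 0 < R) (hν : 0 < ν)
    (hN : eLpNorm (fun x => M x * ‖x - x₀‖ ^ ((n : ℝ) * B)) s volume ≤ ENNReal.ofReal ν)
    (hMν : eLpNorm M s volume ≤ ENNReal.ofReal (R ^ (-((n : ℝ) * B)) * ν)) :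
    MemBL n p s α M ∧ BLnorm n p s α M ≤ moleculeConst n p A B * (ν * R ^ (-((n : ℝ) * A))) := by
  set vol₁ := (volume (closedBall (0 : Rn n) 1)).toReal
  have hvol₁ : 0 < vol₁ := volume_real_closedBall_zero_one_pos
  set K := max ((2 : ℝ) ^ ((n : ℝ) * B)) 1
  set c₀ := K * vol₁ ^ (-(A - B)) * ν * R ^ (-((n : ℝ) * A))
  set q := (2 : ℝ) ^ (-((n : ℝ) * A))
  set t := min p 1
  have hc₀ : 0 < c₀ := by positivity
  have hq1 : q < 1 := two_rpow_neg_mul_lt_one hn hA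
  have ht : 0 < t := lt_min hp one_pos
  have hcoeff : ∀ k : ℕ, c₀ * q ^ k = K * vol₁ ^ (-(A - B)) * ν * (R * 2 ^ k) ^ (-((n : ℝ) * A)) :=
    fun k => by
      rw [Real.mul_rpow hR.le (by positivity), ← Real.rpow_natCast, ← Real.rpow_natCast,
        ← Real.rpow_mul zero_le_two, ← Real.rpow_mul zero_le_two, mul_comm (k : ℝ)]
      ring
  have hdecomp : IsBLDecomp n p s α M (fun k => c₀ * q ^ k) fun k x =>
      (c₀ * q ^ k)⁻¹ * (disjointed (fun k : ℕ => closedBall x₀ (R * 2 ^ k)) k).indicator M x := by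
    refine isBLDecomp_of_hasSum (x₀ := x₀) (r := fun k => R * 2 ^ k)
      (fun k => hM.indicator ?_) (fun k => by positivity) (fun k => by positivity)
      (fun k x hx => indicator_of_notMem ?_ M) (fun k => ?_)
      (hasSum_mul_pow_rpow hc₀.le (by positivity) hq1 ht).summable
      (hasSum_indicator_disjointed_closedBall_mul_two_pow x₀ hR M)
    · exact MeasurableSet.disjointed (fun _ => measurableSet_closedBall) k
    · exact fun hx' => hx (disjointed_subset _ k hx')
    · refine (eLpNorm_indicator_disjointed_closedBall_le hR hν.le hN hMν k).trans
        (ENNReal.ofReal_le_ofReal (le_of_eq ?_))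
      rw [hγ, hcoeff, ← rpow_neg_mul_volume_real_closedBall_rpow x₀ (by positivity : 0 < R * 2 ^ k)]
      ring
  refine (memBL_and_BLnorm_le_of_isBLDecomp hdecomp).imp_right fun hle => hle.trans (le_of_eq ?_)
  rw [tsum_abs_mul_pow_rpow_rpow_inv hc₀.le (by positivity) hq1 ht, moleculeConst]
  ring

lemma memBL_and_BLnorm_le_of_toReal_eLpNorm_pos (hn : 0 < n) (hp : 0 < p)
    (hγ : -α / (p * n) - 1 / p + s.toReal⁻¹ = A - B) (hA : 0 < A) (hB : B ≠ 0)
    {M : Rn n → ℝ} {x₀ : Rn n} (hM : Measurable M) (hm : 0 < (eLpNorm M s volume).toReal)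
    (hν : 0 < (eLpNorm (fun x => M x * ‖x - x₀‖ ^ ((n : ℝ) * B)) s volume).toReal) :
    MemBL n p s α M ∧ BLnorm n p s α M ≤ moleculeConst n p A B *
      ((eLpNorm M s volume).toReal ^ (A / B) *
        (eLpNorm (fun x => M x * ‖x - x₀‖ ^ ((n : ℝ) * B)) s volume).toReal ^ (1 - A / B)) := by
  set m := (eLpNorm M s volume).toReal
  set ν := (eLpNorm (fun x => M x * ‖x - x₀‖ ^ ((n : ℝ) * B)) s volume).toReal
  have hnB : (n : ℝ) * B ≠ 0 := mul_ne_zero (Nat.cast_pos.mpr hn).ne' hB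
  have hνm : 0 < ν / m := div_pos hν hm
  set R := (ν / m) ^ ((n : ℝ) * B)⁻¹
  have hRpow : ∀ x, R ^ x = (ν / m) ^ (((n : ℝ) * B)⁻¹ * x) := fun x => by
    rw [← Real.rpow_mul hνm.le]
  have hMν : R ^ (-((n : ℝ) * B)) * ν = m := by
    rw [hRpow, mul_neg, inv_mul_cancel₀ hnB, Real.rpow_neg_one, inv_div, div_mul_cancel₀ _ hν.ne']
  have hRℜ : ν * R ^ (-((n : ℝ) * A)) = m ^ (A / B) * ν ^ (1 - A / B) := by
    rw [hRpow, show ((n : ℝ) * B)⁻¹ * -((n : ℝ) * A) = -(A / B) by field_simp,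
      Real.div_rpow hν.le hm.le, Real.rpow_neg hν.le, Real.rpow_neg hm.le, Real.rpow_sub hν,
      Real.rpow_one]
    field_simp
  rw [← hRℜ]
  refine memBL_and_BLnorm_le_of_dyadic hn hp hγ hA hM (by positivity) hν
    (ENNReal.ofReal_toReal (ENNReal.toReal_pos_iff.mp hν).2.ne).ge ?_
  rw [hMν, ENNReal.ofReal_toReal (ENNReal.toReal_pos_iff.mp hm).2.ne]

end Molecule

theorem molecular_theorem_general (n : ℕ) (hn : 0 < n) (p : ℝ) (s : ℝ≥0∞) (α A₀ B₀ ε : ℝ)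
    (hp : 0 < p) (hs : 0 < s)
    (hAB : A₀ - B₀ = s.toReal⁻¹ - 1 / p - α / (n * p))
    (hεA : ε < A₀) (hb : B₀ - ε ≠ 0) :
    ∃ C > (0 : ℝ), ∀ (M : Rn n → ℝ) (x₀ : Rn n), Measurable M →
      eLpNorm M s volume < ∞ →
      eLpNorm (fun x => M x * ‖x - x₀‖ ^ ((n : ℝ) * (B₀ - ε))) s volume < ∞ →
      MemBL n p s α M ∧
      BLnorm n p s α M ≤
        C * ((eLpNorm M s volume).toReal ^ ((A₀ - ε) / (B₀ - ε)) *
          (eLpNorm (fun x => M x * ‖x - x₀‖ ^ ((n : ℝ) * (B₀ - ε))) s volume).toReal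
            ^ (1 - (A₀ - ε) / (B₀ - ε))) := by
  have hA : 0 < A₀ - ε := sub_pos.mpr hεA
  have hγ : -α / (p * n) - 1 / p + s.toReal⁻¹ = (A₀ - ε) - (B₀ - ε) := by
    rw [sub_sub_sub_cancel_right, hAB, mul_comm p]
    ring
  refine ⟨moleculeConst n p (A₀ - ε) (B₀ - ε), moleculeConst_pos hn hp hA,
    fun M x₀ hM hm hN => ?_⟩
  by_cases hM0 : M =ᵐ[volume] 0
  · have hC := moleculeConst_pos hn hp hA (B := B₀ - ε)
    exact (memBL_and_BLnorm_nonpos_of_ae_eq_zero hp hM0).imp_right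
      fun hle => hle.trans (by positivity)
  have : NeZero n := ⟨hn.ne'⟩
  have hm0 : eLpNorm M s volume ≠ 0 := fun h =>
    hM0 ((eLpNorm_eq_zero_iff hM.aestronglyMeasurable hs.ne').mp h)
  have hN0 : eLpNorm (fun x => M x * ‖x - x₀‖ ^ ((n : ℝ) * (B₀ - ε))) s volume ≠ 0 := fun h =>
    hM0 (ae_eq_zero_of_eLpNorm_mul_rpow_norm_sub_eq_zero hs.ne'
      (by fun_prop : Measurable _).aestronglyMeasurable h)
  exact memBL_and_BLnorm_le_of_toReal_eLpNorm_pos hn hp hγ hA hb hM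
    (ENNReal.toReal_pos hm0 hm.ne) (ENNReal.toReal_pos hN0 hN.ne)

/-- molecular theorem: with `A₀ - B₀ = 1/s - 1/p - α/(np)`,
`0 < ε < A₀`, `a = A₀ - ε > 0`, `b = B₀ - ε ≠ 0`, every `(p,s,α,ε)`-molecule `M`
belongs to `BL^{p,s}_{|x|^α}` with `‖M‖_{BL} ≤ C ℜ(M)`, `C` independent of `M`. -/
theorem molecular_theorem (n : ℕ) (hn : 0 < n) (p : ℝ) (s : ℝ≥0∞) (α A₀ B₀ ε : ℝ)
    (hp : 0 < p) (hs : 0 < s) (hs' : s ≠ ∞)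
    (hAB : A₀ - B₀ = s.toReal⁻¹ - 1 / p - α / (n * p))
    (hε : 0 < ε) (hεA : ε < A₀) (hb : B₀ - ε ≠ 0) :
    ∃ C > (0 : ℝ), ∀ (M : Rn n → ℝ) (x₀ : Rn n), Measurable M →
      eLpNorm M s volume < ∞ →
      eLpNorm (fun x => M x * ‖x - x₀‖ ^ ((n : ℝ) * (B₀ - ε))) s volume < ∞ →
      MemBL n p s α M ∧
      BLnorm n p s α M ≤
        C * ((eLpNorm M s volume).toReal ^ ((A₀ - ε) / (B₀ - ε)) *
          (eLpNorm (fun x => M x * ‖x - x₀‖ ^ ((n : ℝ) * (B₀ - ε))) s volume).toReal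
            ^ (1 - (A₀ - ε) / (B₀ - ε))) :=
  molecular_theorem_general n hn p s α A₀ B₀ ε hp hs hAB hεA hb
end
end
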